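/- Let p = (x,y) ∈ ℝ². If ((x − x_i)² + (y − y_i)²)/d_i(p)² < 2/(m+2) holds for every i = 1,…,n, then a + c < 0, where a = −m Σ_{i=1}^n d_i(p)^{−(m+2)} (1 − (m+2)(x − x_i)²/d_i(p)²) and c = −m Σ_{i=1}^n d_i(p)^{−(m+2)} (1 − (m+2)(y − y_i)²/d_i(p)²) are the diagonal entries of the Hessian matrix of f at p. -/

import Mathlib

open Real Finset

/-- Distance from `q ∈ ℝ²` (at height `h`) to the point `(xi, yi)` in the base plane. -/
noncomputable def distPt (xi yi h : ℝ) (q : ℝ × ℝ) : ℝ :=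
  Real.sqrt ((q.1 - xi) ^ 2 + (q.2 - yi) ^ 2 + h ^ 2)

/-- The objective functional `f(q, h) = ∑ i, d_i(q,h)^(-m)`. -/
noncomputable def fEnergy {N : ℕ} (X Y : Fin N → ℝ) (m h : ℝ) (q : ℝ × ℝ) : ℝ :=
  ∑ i, distPt (X i) (Y i) h q ^ (-m)

/-- First component of the gradient `F = ∇f`. -/
noncomputable def F1 {N : ℕ} (X Y : Fin N → ℝ) (m h : ℝ) (q : ℝ × ℝ) : ℝ :=
  -m * ∑ i, (q.1 - X i) / distPt (X i) (Y i) h q ^ (m + 2)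

/-- Second component of the gradient `F = ∇f`. -/
noncomputable def F2 {N : ℕ} (X Y : Fin N → ℝ) (m h : ℝ) (q : ℝ × ℝ) : ℝ :=
  -m * ∑ i, (q.2 - Y i) / distPt (X i) (Y i) h q ^ (m + 2)

/-- Entry `a` (the `∂²f/∂x²` entry) of the Hessian matrix of `f(·,h)`. -/
noncomputable def hessA {N : ℕ} (X Y : Fin N → ℝ) (m h : ℝ) (p : ℝ × ℝ) : ℝ :=
  -m * ∑ i, (1 / distPt (X i) (Y i) h p ^ (m + 2)) *
    (1 - (m + 2) * (p.1 - X i) ^ 2 / distPt (X i) (Y i) h p ^ 2)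

/-- Entry `b` (the mixed `∂²f/∂x∂y` entry) of the Hessian matrix of `f(·,h)`. -/
noncomputable def hessB {N : ℕ} (X Y : Fin N → ℝ) (m h : ℝ) (p : ℝ × ℝ) : ℝ :=
  m * (m + 2) * ∑ i, (p.1 - X i) * (p.2 - Y i) / distPt (X i) (Y i) h p ^ (m + 4)

/-- Entry `c` (the `∂²f/∂y²` entry) of the Hessian matrix of `f(·,h)`. -/
noncomputable def hessC {N : ℕ} (X Y : Fin N → ℝ) (m h : ℝ) (p : ℝ × ℝ) : ℝ :=
  -m * ∑ i, (1 / distPt (X i) (Y i) h p ^ (m + 2)) *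
    (1 - (m + 2) * (p.2 - Y i) ^ 2 / distPt (X i) (Y i) h p ^ 2)

/-! The trace of the Hessian is `-m ∑ᵢ (2 - (m + 2) ρᵢ) / dᵢ ^ (m + 2)` with
`ρᵢ = ((x - xᵢ)² + (y - yᵢ)²) / dᵢ²`; the hypothesis `ρᵢ < 2 / (m + 2)` makes every summand
positive, and `m > 0`. -/

lemma distPt_pos (xi yi : ℝ) {h : ℝ} (hh : h ≠ 0) (q : ℝ × ℝ) : 0 < distPt xi yi h q :=
  Real.sqrt_pos.mpr (by positivity)

lemma hessA_add_hessC {N : ℕ} (X Y : Fin N → ℝ) (m h : ℝ) (p : ℝ × ℝ) :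
    hessA X Y m h p + hessC X Y m h p =
      -m * ∑ i, (2 - (m + 2) * (((p.1 - X i) ^ 2 + (p.2 - Y i) ^ 2) /
        distPt (X i) (Y i) h p ^ 2)) / distPt (X i) (Y i) h p ^ (m + 2) := by
  rw [hessA, hessC, ← mul_add, ← sum_add_distrib]
  congr 1
  refine sum_congr rfl fun i _ => ?_
  ring

/-- if `((x-x_i)² + (y-y_i)²)/d_i² < 2/(m+2)` for every `i`, then the
trace `a + c` of the Hessian of `f` at `p` is negative. -/
theorem hessian_trace_negative
    (n : ℕ) (X Y : Fin (n + 1) → ℝ) (h m : ℝ) (hh : 0 < h) (hm : 3 < m ∧ m < 4)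
    (p : ℝ × ℝ)
    (hsmall : ∀ i, ((p.1 - X i) ^ 2 + (p.2 - Y i) ^ 2) / distPt (X i) (Y i) h p ^ 2
      < 2 / (m + 2)) :
    hessA X Y m h p + hessC X Y m h p < 0 := by
  have hm0 : 0 < m := by linarith [hm.1]
  have hsum : 0 < ∑ i, (2 - (m + 2) * (((p.1 - X i) ^ 2 + (p.2 - Y i) ^ 2) /
      distPt (X i) (Y i) h p ^ 2)) / distPt (X i) (Y i) h p ^ (m + 2) := by
    refine sum_pos (fun i _ => div_pos ?_ ?_) univ_nonempty
    · linarith [(lt_div_iff₀' (by linarith : (0 : ℝ) < m + 2)).mp (hsmall i)]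
    · exact rpow_pos_of_pos (distPt_pos _ _ hh.ne' p) _
  rw [hessA_add_hessC]
  exact mul_neg_of_neg_of_pos (neg_neg_of_pos hm0) hsum
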